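/- Let 0 < ε < 1/2 and α > 1/ε. Define x = 1_{[0,1]²} + 1_{[α,α+1]²} ∈ L²(ℝ²) and the deformation τ(u) = ε u, so that x_τ(u) = x(u − τ(u)) = x((1−ε)u). Then ‖x − x_τ‖_{L²(ℝ²)} ≥ 1. In particular, since ‖∇τ‖_∞ = ε can be made arbitrarily small while ‖x − x_τ‖ ≥ 1 and ‖x‖² = 2, the identity representation (and any registration invariant built from it) does not satisfy the Lipschitz deformation-stability bound ‖Φ(x) − Φ(x_τ)‖ ≤ C ‖∇τ‖_∞ ‖x‖ uniformly over such x and τ. -/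

import Mathlib

open MeasureTheory Real

noncomputable section

open Set

/-! Write `x = 1_S` with `S` the union of the two disjoint squares. Then `(x - x_τ)²` is the
indicator of the symmetric difference of `S` and its preimage under `u ↦ (1 - ε) • u`. This map
sends the far square `[α, α+1]²` into the strip `1 < u₁ < α` between the squares, so the far
square lies in that symmetric difference and `‖x - x_τ‖² ≥ 1`. -/

lemma sq_indicator_one {α : Type*} (s : Set α) (u : α) :
    (s.indicator (1 : α → ℝ) u) ^ 2 = s.indicator 1 u := by
  by_cases hu : u ∈ s <;> simp [hu]

lemma sq_indicator_one_sub_indicator_one_comp {α : Type*} (s : Set α) (f : α → α) (u : α) :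
    (s.indicator (1 : α → ℝ) u - s.indicator 1 (f u)) ^ 2 =
      (symmDiff s (f ⁻¹' s)).indicator 1 u := by
  by_cases hu : u ∈ s <;> by_cases hfu : f u ∈ s <;> simp [symmDiff_def, hu, hfu]

lemma integral_sq_indicator_one_sub_indicator_one_comp {α : Type*} [MeasurableSpace α]
    {μ : Measure α} {s : Set α} (hs : MeasurableSet s) {f : α → α} (hf : Measurable f) :
    ∫ u, (s.indicator (1 : α → ℝ) u - s.indicator 1 (f u)) ^ 2 ∂μ =
      μ.real (symmDiff s (f ⁻¹' s)) := by
  simp_rw [sq_indicator_one_sub_indicator_one_comp]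
  exact integral_indicator_one (hs.symmDiff (hf hs))

lemma measure_symmDiff_preimage_smul_ne_top {E : Type*} [NormedAddCommGroup E]
    [NormedSpace ℝ E] [MeasurableSpace E] [BorelSpace E] [FiniteDimensional ℝ E]
    (μ : Measure E) [μ.IsAddHaarMeasure] {r : ℝ} (hr : r ≠ 0) {s : Set E} (hs : μ s ≠ ⊤) :
    μ (symmDiff s ((r • ·) ⁻¹' s)) ≠ ⊤ := by
  refine ne_top_of_le_ne_top ?_ ((measure_mono symmDiff_le_sup).trans (measure_union_le _ _))
  rw [Measure.addHaar_preimage_smul μ hr]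
  exact ENNReal.add_ne_top.2 ⟨hs, ENNReal.mul_ne_top ENNReal.ofReal_ne_top hs⟩

lemma volume_Icc_prod_Icc_add_one (a b : ℝ) :
    volume (Icc a (a + 1) ×ˢ Icc b (b + 1)) = 1 := by
  rw [Measure.volume_eq_prod, Measure.prod_prod, Real.volume_Icc, Real.volume_Icc]
  simp

lemma one_sub_mul_mem_Ioo {ε α t : ℝ} (hε0 : 0 < ε) (hε : ε < 1/2) (hα : α > 1/ε)
    (ht : t ∈ Icc α (α + 1)) : (1 - ε) * t ∈ Ioo 1 α := by
  have hεα : 1 < ε * α := by rwa [gt_iff_lt, div_lt_iff₀ hε0, mul_comm] at hα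
  have hα0 : 0 < α := by nlinarith
  -- `(1 - ε) t ≥ (1 - ε) α > ε α > 1` as `ε < 1/2`, and `(1 - ε) t ≤ α + 1 - ε (α + 1) < α`.
  obtain ⟨ht₁, ht₂⟩ := ht
  constructor <;> nlinarith [mul_pos (by linarith : (0:ℝ) < 1 - 2 * ε) hα0]

lemma one_sub_smul_notMem_squares {ε α : ℝ} (hε0 : 0 < ε) (hε : ε < 1/2) (hα : α > 1/ε)
    {u : ℝ × ℝ} (hu : u ∈ Icc α (α + 1) ×ˢ Icc α (α + 1)) :
    (1 - ε) • u ∉ Icc (0:ℝ) 1 ×ˢ Icc (0:ℝ) 1 ∪ Icc α (α + 1) ×ˢ Icc α (α + 1) := by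
  have hgap := one_sub_mul_mem_Ioo hε0 hε hα hu.1
  rintro (h | h)
  · exact hgap.1.not_ge h.1.2
  · exact hgap.2.not_ge h.1.1

theorem registration_invariant_unstable
    (ε α : ℝ) (hε0 : 0 < ε) (hε : ε < 1/2) (hα : α > 1/ε)
    (x : ℝ × ℝ → ℝ)
    (hx : x = fun u =>
      Set.indicator ((Set.Icc (0:ℝ) 1) ×ˢ (Set.Icc (0:ℝ) 1)) (fun _ => (1:ℝ)) u +
      Set.indicator ((Set.Icc α (α+1)) ×ˢ (Set.Icc α (α+1))) (fun _ => (1:ℝ)) u) :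
    (∫ u : ℝ × ℝ, (x u) ^ 2) = 2 ∧
    1 ≤ Real.sqrt (∫ u : ℝ × ℝ, (x u - x ((1 - ε) • u)) ^ 2) := by
  set A := Icc (0:ℝ) 1 ×ˢ Icc (0:ℝ) 1
  set B := Icc α (α + 1) ×ˢ Icc α (α + 1)
  have hA : volume A = 1 := by simpa only [zero_add] using volume_Icc_prod_Icc_add_one 0 0
  have hB : volume B = 1 := volume_Icc_prod_Icc_add_one α α
  have hα1 : 1 < α := by
    have h := one_sub_mul_mem_Ioo hε0 hε hα ⟨le_rfl, by linarith⟩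
    exact h.1.trans h.2
  have hAB : Disjoint A B :=
    disjoint_prod.2 (Or.inl (disjoint_left.2 fun t h₀ h₁ => by linarith [h₀.2, h₁.1]))
  have hS : MeasurableSet (A ∪ B) := by measurability
  obtain rfl : x = (A ∪ B).indicator 1 := by rw [hx, indicator_union_of_disjoint hAB]; rfl
  refine ⟨?_, ?_⟩
  · simp_rw [sq_indicator_one]
    rw [integral_indicator_one hS, measureReal_def, measure_union hAB (by measurability), hA, hB]
    norm_num
  · have hB_sub : B ⊆ symmDiff (A ∪ B) (((1 - ε) • ·) ⁻¹' (A ∪ B)) :=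
      fun u hu => Or.inl ⟨Or.inr hu, one_sub_smul_notMem_squares hε0 hε hα hu⟩
    have hSfin : volume (A ∪ B) ≠ ⊤ := measure_union_ne_top (by simp [hA]) (by simp [hB])
    rw [integral_sq_indicator_one_sub_indicator_one_comp hS (measurable_const_smul _),
      Real.one_le_sqrt]
    calc (1 : ℝ) = volume.real B := by rw [measureReal_def, hB]; rfl
      _ ≤ _ := measureReal_mono hB_sub
        (measure_symmDiff_preimage_smul_ne_top volume (by linarith) hSfin)
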